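/- Let λ be a probability measure on X × X with marginals α and β, and let π(x₁, dx₂) and π̂(x₂, dx₁) be transition kernels giving the disintegrations of λ in the two directions, i.e. λ(dx₁, dx₂) = α(dx₁)π(x₁, dx₂) = β(dx₂)π̂(x₂, dx₁) (so that απ = β and βπ̂ = α). Let f and g be square integrable with respect to α and β respectively, with ∫ f(x₁) α(dx₁) = ∫ g(x₂) β(dx₂) = 0. Then |∫ f(x₁) g(x₂) λ(dx₁, dx₂)| ≤ √δ(π) · ‖f‖_{L²(α)} · ‖g‖_{L²(β)}. -/

import Mathlib

open MeasureTheory ProbabilityTheory Filter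

noncomputable section

/-- Markov–Dobrushin contraction coefficient. -/
def dob {𝕏 : Type*} [MeasurableSpace 𝕏] (κ : Kernel 𝕏 𝕏) : ℝ :=
  ⨆ (x₁ : 𝕏) (x₂ : 𝕏) (A : Set 𝕏) (_ : MeasurableSet A),
    |(κ x₁ A).toReal - (κ x₂ A).toReal|

/-- Multi-step kernel auxiliary: composition of `k` one-step kernels starting at time `i`. -/
def multiStepAux {𝕏 : Type*} [MeasurableSpace 𝕏] (π : ℕ → Kernel 𝕏 𝕏) (i : ℕ) :
    ℕ → Kernel 𝕏 𝕏
  | 0 => Kernel.id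
  | k + 1 => (π (i + k)) ∘ₖ (multiStepAux π i k)

/-- Multi-step kernel `π_{i,j} = π_{i,i+1} π_{i+1,i+2} ⋯ π_{j-1,j}`. -/
def multiStep {𝕏 : Type*} [MeasurableSpace 𝕏] (π : ℕ → Kernel 𝕏 𝕏) (i j : ℕ) :
    Kernel 𝕏 𝕏 :=
  multiStepAux π i (j - i)

/-- `α_n = min_{1 ≤ i ≤ n-1} α(π_{i,i+1})`, with `α(π) = 1 - δ(π)`. -/
def alphaMin {𝕏 : Type*} [MeasurableSpace 𝕏] (π : ℕ → Kernel 𝕏 𝕏) (n : ℕ) : ℝ :=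
  sInf {a : ℝ | ∃ i, 1 ≤ i ∧ i ≤ n - 1 ∧ a = 1 - dob (π i)}

/-- `α_n^β = min { α(π_{i,i+1}) : 1 ≤ i ≤ n-1, β_i = 1 }`. -/
def alphaBeta {𝕏 : Type*} [MeasurableSpace 𝕏] (π : ℕ → Kernel 𝕏 𝕏) (β : ℕ → ℕ)
    (n : ℕ) : ℝ :=
  sInf {a : ℝ | ∃ i, 1 ≤ i ∧ i ≤ n - 1 ∧ β i = 1 ∧ a = 1 - dob (π i)}

/-- `κ^β_j = ∑_{k=1}^j β_k`. -/
def kappa (β : ℕ → ℕ) (j : ℕ) : ℕ := ∑ k ∈ Finset.Icc 1 j, β k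

/-- Condition (H_β): there exist `m₀ > 0`, `c > 0` such that for every `n` the sequence
`β^{(n)}` satisfies `κ^β_{n,j} - κ^β_{n,i} ≥ c (j - i)` for every pair `i < j`
with `j - i ≥ m₀`. -/
def HBeta (β : ℕ → ℕ → ℕ) : Prop :=
  ∃ m₀ : ℕ, 0 < m₀ ∧ ∃ c : ℝ, 0 < c ∧
    ∀ n i j : ℕ, i < j → m₀ ≤ j - i →
      c * ((j : ℝ) - (i : ℝ)) ≤ (kappa (β n) j : ℝ) - (kappa (β n) i : ℝ)

/-- The sigma-field `σ(X_1, …, X_i)`. -/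
def natFiltration {Ω 𝕏 : Type*} [MeasurableSpace 𝕏] (Xc : ℕ → Ω → 𝕏) (i : ℕ) :
    MeasurableSpace Ω :=
  ⨆ k ∈ Finset.Icc 1 i, MeasurableSpace.comap (Xc k) inferInstance

/-- `(X_i)_{1 ≤ i ≤ n}` is a Markov chain on `(Ω, F, P)` with one-step transition kernels
`π_{i,i+1}`: each `X_i` is measurable and
`P[X_{i+1} ∈ A | σ(X_1,…,X_i)] = π_{i,i+1}(X_i, A)` a.s. -/
def IsMarkovChainOn {Ω 𝕏 : Type*} [MeasurableSpace Ω] [MeasurableSpace 𝕏]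
    (P : Measure Ω) (n : ℕ) (Xc : ℕ → Ω → 𝕏) (π : ℕ → Kernel 𝕏 𝕏) : Prop :=
  (∀ i, Measurable (Xc i)) ∧
  ∀ i, 1 ≤ i → i + 1 ≤ n → ∀ A : Set 𝕏, MeasurableSet A →
    (fun ω => ((π i) (Xc i ω) A).toReal)
      =ᵐ[P] P[(Xc (i + 1) ⁻¹' A).indicator (fun _ => (1 : ℝ)) | natFiltration Xc i]

/-- Oscillation of a function. -/
def osc {𝕏 : Type*} (u : 𝕏 → ℝ) : ℝ := ⨆ (x₁ : 𝕏) (x₂ : 𝕏), |u x₁ - u x₂|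

/-- Action of a kernel on a function: `(π u)(x) = ∫ u(y) π(x, dy)`. -/
def kApp {𝕏 : Type*} [MeasurableSpace 𝕏] (κ : Kernel 𝕏 𝕏) (u : 𝕏 → ℝ) (x : 𝕏) : ℝ :=
  ∫ y, u y ∂(κ x)

/-- Essential supremum norm `‖Z‖_{L∞}` of a real random variable. -/
def essSupNorm {Ω : Type*} [MeasurableSpace Ω] (P : Measure Ω) (Z : Ω → ℝ) : ℝ :=
  essSup (fun ω => |Z ω|) P

/-- Oscillation of a random variable: `ess sup Z - ess inf Z`. -/
def oscRV {Ω : Type*} [MeasurableSpace Ω] (P : Measure Ω) (Z : Ω → ℝ) : ℝ :=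
  essSup Z P - essInf Z P

/-- `Z_k^{(n)} = ∑_{i=k}^n E[f_i(X_i) | X_k]`. -/
def Zfun {Ω 𝕏 : Type*} [MeasurableSpace Ω] [MeasurableSpace 𝕏] (P : Measure Ω)
    (Xc : ℕ → Ω → 𝕏) (f : ℕ → 𝕏 → ℝ) (n k : ℕ) : Ω → ℝ :=
  fun ω => ∑ i ∈ Finset.Icc k n,
    (P[fun ω' => f i (Xc i ω') | MeasurableSpace.comap (Xc k) inferInstance]) ω

end

section Aux

variable {𝕏 : Type*} [MeasurableSpace 𝕏]

lemma integrable_of_abs_le {μ : Measure 𝕏} [IsFiniteMeasure μ] {u : 𝕏 → ℝ} (hu : Measurable u)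
    {C : ℝ} (hb : ∀ x, |u x| ≤ C) : Integrable u μ :=
  (integrable_const C).mono' hu.aestronglyMeasurable (ae_of_all _ (fun x => by simpa using hb x))

lemma prob_toReal_le_one {μ : Measure 𝕏} [IsProbabilityMeasure μ] (A : Set 𝕏) :
    (μ A).toReal ≤ 1 := by
  have := prob_le_one (μ := μ) (s := A)
  simpa using ENNReal.toReal_mono (by norm_num) this

lemma abs_diff_prob_le_one (κ : Kernel 𝕏 𝕏) [IsMarkovKernel κ] (x y : 𝕏) (A : Set 𝕏) :
    |(κ x A).toReal - (κ y A).toReal| ≤ 1 := by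
  rw [abs_sub_le_iff]
  have h1 := prob_toReal_le_one (μ := κ x) A
  have h2 := prob_toReal_le_one (μ := κ y) A
  have h3 := ENNReal.toReal_nonneg (a := κ x A)
  have h4 := ENNReal.toReal_nonneg (a := κ y A)
  constructor <;> linarith

lemma dob_le_one (κ : Kernel 𝕏 𝕏) [IsMarkovKernel κ] : dob κ ≤ 1 := by
  refine Real.iSup_le (fun x => Real.iSup_le (fun y => Real.iSup_le (fun A =>
    Real.iSup_le (fun _ => abs_diff_prob_le_one κ x y A) zero_le_one) zero_le_one)
    zero_le_one) zero_le_one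

lemma abs_le_dob (κ : Kernel 𝕏 𝕏) [IsMarkovKernel κ] (x y : 𝕏) {A : Set 𝕏}
    (hA : MeasurableSet A) : |(κ x A).toReal - (κ y A).toReal| ≤ dob κ := by
  have b4 : ∀ x y (A : Set 𝕏), BddAbove (Set.range fun _ : MeasurableSet A =>
      |(κ x A).toReal - (κ y A).toReal|) := by
    intro x y A
    refine ⟨1, ?_⟩
    rintro _ ⟨_, rfl⟩
    exact abs_diff_prob_le_one κ x y A
  have b3 : ∀ x y, BddAbove (Set.range fun A : Set 𝕏 =>
      ⨆ (_ : MeasurableSet A), |(κ x A).toReal - (κ y A).toReal|) := by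
    intro x y
    refine ⟨1, ?_⟩
    rintro _ ⟨A, rfl⟩
    exact Real.iSup_le (fun _ => abs_diff_prob_le_one κ x y A) zero_le_one
  have b2 : ∀ x, BddAbove (Set.range fun y => ⨆ (A : Set 𝕏) (_ : MeasurableSet A),
      |(κ x A).toReal - (κ y A).toReal|) := by
    intro x
    refine ⟨1, ?_⟩
    rintro _ ⟨y, rfl⟩
    exact Real.iSup_le (fun A => Real.iSup_le (fun _ => abs_diff_prob_le_one κ x y A)
      zero_le_one) zero_le_one
  have b1 : BddAbove (Set.range fun x => ⨆ (y : 𝕏) (A : Set 𝕏) (_ : MeasurableSet A),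
      |(κ x A).toReal - (κ y A).toReal|) := by
    refine ⟨1, ?_⟩
    rintro _ ⟨x, rfl⟩
    exact Real.iSup_le (fun y => Real.iSup_le (fun A => Real.iSup_le
      (fun _ => abs_diff_prob_le_one κ x y A) zero_le_one) zero_le_one) zero_le_one
  exact le_ciSup_of_le b1 x (le_ciSup_of_le (b2 x) y (le_ciSup_of_le (b3 x y) A
    (le_ciSup_of_le (b4 x y A) hA le_rfl)))

lemma dob_nonneg [Nonempty 𝕏] (κ : Kernel 𝕏 𝕏) [IsMarkovKernel κ] : 0 ≤ dob κ := by
  obtain ⟨x⟩ := (inferInstance : Nonempty 𝕏)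
  exact le_trans (abs_nonneg _) (abs_le_dob κ x x MeasurableSet.empty)

lemma cs_sq {μ : Measure 𝕏} {u v : 𝕏 → ℝ} (hu2 : Integrable (fun x => u x ^ 2) μ)
    (hv2 : Integrable (fun x => v x ^ 2) μ) (huv : Integrable (fun x => u x * v x) μ) :
    (∫ x, u x * v x ∂μ) ^ 2 ≤ (∫ x, u x ^ 2 ∂μ) * ∫ x, v x ^ 2 ∂μ := by
  set A := ∫ x, u x ^ 2 ∂μ
  set B := ∫ x, v x ^ 2 ∂μ
  set C := ∫ x, u x * v x ∂μ
  have key : ∀ t : ℝ, 0 ≤ A * (t * t) + (2 * C) * t + B := by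
    intro t
    have h0 : (0:ℝ) ≤ ∫ x, (t * u x + v x) ^ 2 ∂μ := integral_nonneg (fun x => sq_nonneg _)
    have hexp : (fun x => (t * u x + v x) ^ 2)
        = fun x => (t * t) * u x ^ 2 + ((2 * t) * (u x * v x) + v x ^ 2) := by
      funext x; ring
    rw [hexp, integral_add (hu2.const_mul _)
        (show Integrable (fun x => (2 * t) * (u x * v x) + v x ^ 2) μ from
          (huv.const_mul _).add hv2),
      integral_add (huv.const_mul _) hv2, integral_const_mul, integral_const_mul] at h0
    ring_nf at h0 ⊢
    linarith
  have hd := discrim_le_zero key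
  rw [discrim] at hd
  nlinarith

lemma cs_abs {μ : Measure 𝕏} {u v : 𝕏 → ℝ} (hu2 : Integrable (fun x => u x ^ 2) μ)
    (hv2 : Integrable (fun x => v x ^ 2) μ) (huv : Integrable (fun x => u x * v x) μ) :
    |∫ x, u x * v x ∂μ| ≤ Real.sqrt (∫ x, u x ^ 2 ∂μ) * Real.sqrt (∫ x, v x ^ 2 ∂μ) := by
  have h := cs_sq hu2 hv2 huv
  have h2 : Real.sqrt ((∫ x, u x * v x ∂μ) ^ 2)
      ≤ Real.sqrt ((∫ x, u x ^ 2 ∂μ) * ∫ x, v x ^ 2 ∂μ) := Real.sqrt_le_sqrt h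
  rwa [Real.sqrt_sq_eq_abs, Real.sqrt_mul (integral_nonneg (fun x => sq_nonneg _))] at h2

end Aux


section Aux2
variable {𝕏 : Type*} [MeasurableSpace 𝕏]

lemma integrable_of_abs_le' {μ : Measure 𝕏} [IsFiniteMeasure μ] {u : 𝕏 → ℝ} (hu : Measurable u)
    {C : ℝ} (hb : ∀ x, |u x| ≤ C) : Integrable u μ :=
  (integrable_const C).mono' hu.aestronglyMeasurable (ae_of_all _ (fun x => by simpa using hb x))

lemma prob_toReal_le_one' {μ : Measure 𝕏} [IsProbabilityMeasure μ] (A : Set 𝕏) :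
    (μ A).toReal ≤ 1 := by
  simpa using ENNReal.toReal_mono (by norm_num) (prob_le_one (μ := μ) (s := A))

lemma integral_sub_integral_le (μ ν : Measure 𝕏) [IsProbabilityMeasure μ]
    [IsProbabilityMeasure ν] {u : 𝕏 → ℝ} (hu : Measurable u) {c L d : ℝ} (hL : 0 ≤ L)
    (hd : 0 ≤ d) (h1 : ∀ x, c ≤ u x) (h2 : ∀ x, u x ≤ c + L)
    (h : ∀ A : Set 𝕏, MeasurableSet A → (μ A).toReal - (ν A).toReal ≤ d) :
    (∫ x, u x ∂μ) - ∫ x, u x ∂ν ≤ L * d := by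
  set w : 𝕏 → ℝ := fun x => u x - c with hwdef
  have hwm : Measurable w := hu.sub measurable_const
  have hw0 : ∀ x, 0 ≤ w x := fun x => by simp only [hwdef]; linarith [h1 x]
  have hwL : ∀ x, w x ≤ L := fun x => by simp only [hwdef]; linarith [h2 x]
  have hwb : ∀ x, |w x| ≤ L := fun x => abs_le.2 ⟨by linarith [hw0 x], hwL x⟩
  have hub : ∀ x, |u x| ≤ |c| + L := fun x =>
    abs_le.2 ⟨by linarith [h1 x, neg_abs_le c], by linarith [h2 x, le_abs_self c]⟩
  have hiuμ : Integrable u μ := integrable_of_abs_le' hu hub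
  have hiuν : Integrable u ν := integrable_of_abs_le' hu hub
  have hiμ : Integrable w μ := integrable_of_abs_le' hwm hwb
  have hiν : Integrable w ν := integrable_of_abs_le' hwm hwb
  have hred : (∫ x, u x ∂μ) - ∫ x, u x ∂ν = (∫ x, w x ∂μ) - ∫ x, w x ∂ν := by
    have e1 : ∫ x, w x ∂μ = (∫ x, u x ∂μ) - c := by
      simp only [hwdef]
      rw [integral_sub hiuμ (integrable_const c), integral_const]
      simp
    have e2 : ∫ x, w x ∂ν = (∫ x, u x ∂ν) - c := by
      simp only [hwdef]
      rw [integral_sub hiuν (integrable_const c), integral_const]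
      simp
    rw [e1, e2]; ring
  have keyμ := hiμ.integral_eq_integral_meas_lt (ae_of_all _ hw0)
  have keyν := hiν.integral_eq_integral_meas_lt (ae_of_all _ hw0)
  have measμ : ∀ ρ : Measure 𝕏, Measurable fun t : ℝ => (ρ {a | t < w a}).toReal := by
    intro ρ
    have hmono : Antitone (fun t : ℝ => ρ {a | t < w a}) := fun s t hst =>
      measure_mono (fun a ha => lt_of_le_of_lt hst ha)
    exact hmono.measurable.ennreal_toReal
  have hind : Integrable (Set.indicator (Set.Ioc (0:ℝ) L) fun _ => (1:ℝ))
      (volume.restrict (Set.Ioi (0:ℝ))) := by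
    rw [integrable_indicator_iff measurableSet_Ioc]
    refine integrableOn_const (ne_of_lt ?_)
    calc (volume.restrict (Set.Ioi (0:ℝ))) (Set.Ioc (0:ℝ) L)
        ≤ volume (Set.Ioc (0:ℝ) L) := Measure.restrict_le_self _
      _ = ENNReal.ofReal (L - 0) := Real.volume_Ioc
      _ < ⊤ := ENNReal.ofReal_lt_top
  have hFint : ∀ ρ : Measure 𝕏, IsProbabilityMeasure ρ →
      Integrable (fun t : ℝ => (ρ {a | t < w a}).toReal) (volume.restrict (Set.Ioi (0:ℝ))) := by
    intro ρ hρ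
    refine hind.mono' (measμ ρ).aestronglyMeasurable ?_
    rw [ae_restrict_iff' measurableSet_Ioi]
    refine ae_of_all _ (fun t ht => ?_)
    rw [Real.norm_of_nonneg ENNReal.toReal_nonneg]
    by_cases htL : t ≤ L
    · rw [Set.indicator_of_mem (Set.mem_Ioc.2 ⟨ht, htL⟩)]
      exact prob_toReal_le_one' _
    · have : {a | t < w a} = ∅ := by
        ext a; simp only [Set.mem_setOf_eq, Set.mem_empty_iff_false, iff_false, not_lt]
        exact le_trans (hwL a) (le_of_not_ge htL)
      rw [Set.indicator_of_notMem (by simp [Set.mem_Ioc, htL]), this]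
      simp
  have hindd : Integrable (Set.indicator (Set.Ioc (0:ℝ) L) fun _ => d)
      (volume.restrict (Set.Ioi (0:ℝ))) := by
    rw [integrable_indicator_iff measurableSet_Ioc]
    refine integrableOn_const (ne_of_lt ?_)
    calc (volume.restrict (Set.Ioi (0:ℝ))) (Set.Ioc (0:ℝ) L)
        ≤ volume (Set.Ioc (0:ℝ) L) := Measure.restrict_le_self _
      _ = ENNReal.ofReal (L - 0) := Real.volume_Ioc
      _ < ⊤ := ENNReal.ofReal_lt_top
  rw [hred, keyμ, keyν]
  simp only [Measure.real]
  rw [← integral_sub (hFint μ inferInstance) (hFint ν inferInstance)]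
  calc ∫ t in Set.Ioi (0:ℝ), ((μ {a | t < w a}).toReal - (ν {a | t < w a}).toReal)
      ≤ ∫ t in Set.Ioi (0:ℝ), Set.indicator (Set.Ioc (0:ℝ) L) (fun _ => d) t := by
        refine setIntegral_mono_on ((hFint μ inferInstance).sub (hFint ν inferInstance))
          hindd measurableSet_Ioi (fun t ht => ?_)
        by_cases htL : t ≤ L
        · rw [Set.indicator_of_mem (Set.mem_Ioc.2 ⟨ht, htL⟩)]
          exact h _ (measurableSet_lt measurable_const hwm)
        · have he : {a | t < w a} = ∅ := by
            ext a; simp only [Set.mem_setOf_eq, Set.mem_empty_iff_false, iff_false, not_lt]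
            exact le_trans (hwL a) (le_of_not_ge htL)
          rw [Set.indicator_of_notMem (by simp [Set.mem_Ioc, htL]), he]
          simp
    _ = L * d := by
        rw [setIntegral_indicator measurableSet_Ioc]
        have : Set.Ioi (0:ℝ) ∩ Set.Ioc (0:ℝ) L = Set.Ioc (0:ℝ) L := by
          apply Set.inter_eq_self_of_subset_right
          exact fun t ht => ht.1
        rw [this, setIntegral_const, Measure.real, Real.volume_Ioc, smul_eq_mul,
          ENNReal.toReal_ofReal (by linarith)]
        ring

end Aux2


section Aux3
variable {𝕏 : Type*} [MeasurableSpace 𝕏]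

lemma measurable_kApp (κ : Kernel 𝕏 𝕏) [IsSFiniteKernel κ] {u : 𝕏 → ℝ} (hu : Measurable u) :
    Measurable (kApp κ u) := by
  have : StronglyMeasurable (Function.uncurry fun (_ : 𝕏) (y : 𝕏) => u y) :=
    (hu.comp measurable_snd).stronglyMeasurable
  exact (MeasureTheory.StronglyMeasurable.integral_kernel_prod_right (κ := κ) this).measurable

lemma kApp_bounds (κ : Kernel 𝕏 𝕏) [IsMarkovKernel κ] {u : 𝕏 → ℝ} (hu : Measurable u)
    {c C : ℝ} (h1 : ∀ x, c ≤ u x) (h2 : ∀ x, u x ≤ C) (x : 𝕏) :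
    c ≤ kApp κ u x ∧ kApp κ u x ≤ C := by
  have hb : ∀ y, |u y| ≤ max |c| |C| := fun y => by
    rcases abs_le.1 (le_refl |c|) with _
    refine abs_le.2 ⟨?_, ?_⟩
    · calc -(max |c| |C|) ≤ -|c| := by simp
        _ ≤ c := neg_abs_le c
        _ ≤ u y := h1 y
    · calc u y ≤ C := h2 y
        _ ≤ |C| := le_abs_self C
        _ ≤ max |c| |C| := le_max_right _ _
  have hint : Integrable u (κ x) := integrable_of_abs_le' hu hb
  constructor
  · calc c = ∫ _, c ∂(κ x) := by simp
      _ ≤ ∫ y, u y ∂(κ x) := integral_mono (integrable_const c) hint h1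
  · calc kApp κ u x ≤ ∫ _, C ∂(κ x) := integral_mono hint (integrable_const C) h2
      _ = C := by simp

/-- One Dobrushin step: applying `κ` shrinks the oscillation interval by `dob κ`. -/
lemma kApp_osc_step [Nonempty 𝕏] (κ : Kernel 𝕏 𝕏) [IsMarkovKernel κ] {u : 𝕏 → ℝ}
    (hu : Measurable u) {c L : ℝ} (hL : 0 ≤ L) (h1 : ∀ x, c ≤ u x) (h2 : ∀ x, u x ≤ c + L) :
    ∃ c', (∀ x, c' ≤ kApp κ u x ∧ kApp κ u x ≤ c' + L * dob κ) ∧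
      (∀ x, c ≤ kApp κ u x ∧ kApp κ u x ≤ c + L) := by
  have hcont : ∀ x, c ≤ kApp κ u x ∧ kApp κ u x ≤ c + L := fun x =>
    kApp_bounds κ hu h1 h2 x
  have hpair : ∀ x y, kApp κ u x - kApp κ u y ≤ L * dob κ := by
    intro x y
    exact integral_sub_integral_le (κ x) (κ y) hu hL (dob_nonneg κ) h1 h2
      (fun A hA => le_trans (le_abs_self _) (abs_le_dob κ x y hA))
  have hne : (Set.range (kApp κ u)).Nonempty := Set.range_nonempty _
  have hbdd : BddBelow (Set.range (kApp κ u)) := by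
    refine ⟨c, ?_⟩
    rintro _ ⟨x, rfl⟩
    exact (hcont x).1
  refine ⟨sInf (Set.range (kApp κ u)), fun x => ⟨csInf_le hbdd ⟨x, rfl⟩, ?_⟩, hcont⟩
  have : kApp κ u x - L * dob κ ≤ sInf (Set.range (kApp κ u)) := by
    refine le_csInf hne ?_
    rintro _ ⟨y, rfl⟩
    linarith [hpair x y]
  linarith

end Aux3


open Topology

section Core
variable {𝕏 : Type*} [MeasurableSpace 𝕏]


lemma trunc_abs_le (a N : ℝ) (hN : 0 ≤ N) : |max (min a N) (-N)| ≤ |a| := by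
  refine abs_le.2 ⟨?_, ?_⟩
  · refine le_trans (le_min (neg_abs_le a) ?_) (le_max_left _ _)
    linarith [abs_nonneg a]
  · refine max_le (le_trans (min_le_left _ _) (le_abs_self a)) ?_
    linarith [abs_nonneg a]

lemma trunc_abs_le_N (a N : ℝ) (hN : 0 ≤ N) : |max (min a N) (-N)| ≤ N := by
  refine abs_le.2 ⟨le_max_right _ _, max_le (min_le_right _ _) (by linarith)⟩

lemma trunc_tendsto (a : ℝ) :
    Filter.Tendsto (fun N : ℕ => max (min a (N:ℝ)) (-(N:ℝ))) Filter.atTop (nhds a) := by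
  refine tendsto_const_nhds.congr' ?_
  rw [Filter.eventuallyEq_iff_exists_mem]
  refine ⟨{N : ℕ | ⌈|a|⌉₊ ≤ N}, Filter.mem_atTop _, fun N hN => ?_⟩
  have h1 : |a| ≤ (N : ℝ) := le_trans (Nat.le_ceil _) (by exact_mod_cast hN)
  have h2 : a ≤ (N:ℝ) := le_trans (le_abs_self a) h1
  have h3 : -(N:ℝ) ≤ a := by linarith [neg_abs_le a]
  show a = max (min a (N:ℝ)) (-(N:ℝ))
  rw [min_eq_left h2, max_eq_left h3]

lemma core_bound
    (lam : Measure (𝕏 × 𝕏)) [IsProbabilityMeasure lam]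
    (mα mβ : Measure 𝕏) [IsProbabilityMeasure mα] [IsProbabilityMeasure mβ]
    (π πhat : Kernel 𝕏 𝕏) [IsMarkovKernel π] [IsMarkovKernel πhat]
    (hdis : lam = mα ⊗ₘ π) (hdishat : lam = (mβ ⊗ₘ πhat).map Prod.swap)
    (f g : 𝕏 → ℝ) (hfm : Measurable f) (hgm : Measurable g)
    {Mf Mg : ℝ} (hbf : ∀ x, |f x| ≤ Mf) (hbg : ∀ x, |g x| ≤ Mg)
    (hg0 : ∫ x, g x ∂mβ = 0) :
    |∫ p, f p.1 * g p.2 ∂lam| ≤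
      Real.sqrt (dob π) * Real.sqrt (∫ x, f x ^ 2 ∂mα) * Real.sqrt (∫ x, g x ^ 2 ∂mβ) := by
  classical
  have hX : Nonempty 𝕏 := by
    by_contra h
    rw [not_nonempty_iff] at h
    have h1 := measure_univ (μ := lam)
    rw [Set.univ_eq_empty_iff.2 inferInstance, measure_empty] at h1
    exact one_ne_zero h1.symm
  set M : ℝ := max Mf (max Mg 1) with hMdef
  have hM1 : (1:ℝ) ≤ M := le_max_of_le_right (le_max_right _ _)
  have hM0 : (0:ℝ) < M := lt_of_lt_of_le one_pos hM1
  have hMf : ∀ x, |f x| ≤ M := fun x => le_trans (hbf x) (le_max_left _ _)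
  have hMg : ∀ x, |g x| ≤ M := fun x =>
    le_trans (hbg x) (le_max_of_le_right (le_max_left _ _))
  set δ : ℝ := dob π with hδdef
  have hδ0 : 0 ≤ δ := dob_nonneg π
  set P : (𝕏 → ℝ) → 𝕏 → ℝ := kApp π with hPdef
  set Q : (𝕏 → ℝ) → 𝕏 → ℝ := kApp πhat with hQdef
  set S : (𝕏 → ℝ) → 𝕏 → ℝ := fun u => Q (P u) with hSdef
  -- boundedness preservation
  have hPgood : ∀ u, Measurable u → (∀ x, |u x| ≤ M) →
      Measurable (P u) ∧ ∀ x, |P u x| ≤ M := by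
    intro u hu hb
    refine ⟨measurable_kApp π hu, fun x => abs_le.2 ?_⟩
    exact kApp_bounds π hu (fun y => (abs_le.1 (hb y)).1) (fun y => (abs_le.1 (hb y)).2) x
  have hQgood : ∀ u, Measurable u → (∀ x, |u x| ≤ M) →
      Measurable (Q u) ∧ ∀ x, |Q u x| ≤ M := by
    intro u hu hb
    refine ⟨measurable_kApp πhat hu, fun x => abs_le.2 ?_⟩
    exact kApp_bounds πhat hu (fun y => (abs_le.1 (hb y)).1) (fun y => (abs_le.1 (hb y)).2) x
  -- integrability of products
  have hprodM : ∀ (u v : 𝕏 → ℝ), Measurable u → Measurable v →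
      Measurable (fun p : 𝕏 × 𝕏 => v p.1 * u p.2) := fun u v hu hv =>
    (hv.comp measurable_fst).mul (hu.comp measurable_snd)
  have hprodB : ∀ (u v : 𝕏 → ℝ), (∀ x, |u x| ≤ M) → (∀ x, |v x| ≤ M) →
      ∀ p : 𝕏 × 𝕏, |v p.1 * u p.2| ≤ M * M := by
    intro u v hbu hbv p
    rw [abs_mul]
    exact mul_le_mul (hbv p.1) (hbu p.2) (abs_nonneg _) hM0.le
  have hprod_int : ∀ (u v : 𝕏 → ℝ), Measurable u → Measurable v →
      (∀ x, |u x| ≤ M) → (∀ x, |v x| ≤ M) →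
      Integrable (fun p : 𝕏 × 𝕏 => v p.1 * u p.2) lam := fun u v hu hv hbu hbv =>
    integrable_of_abs_le' (hprodM u v hu hv) (hprodB u v hbu hbv)
  have hmul_int : ∀ (ρ : Measure 𝕏), IsProbabilityMeasure ρ → ∀ (u v : 𝕏 → ℝ),
      Measurable u → Measurable v → (∀ x, |u x| ≤ M) → (∀ x, |v x| ≤ M) →
      Integrable (fun y => u y * v y) ρ := by
    intro ρ hρ u v hu hv hbu hbv
    refine integrable_of_abs_le' (hu.mul hv) (C := M * M) (fun y => ?_)
    rw [abs_mul]
    exact mul_le_mul (hbu y) (hbv y) (abs_nonneg _) hM0.le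
  -- the two disintegration identities
  have he1 : ∀ (u v : 𝕏 → ℝ), Measurable u → Measurable v →
      (∀ x, |u x| ≤ M) → (∀ x, |v x| ≤ M) →
      ∫ p, v p.1 * u p.2 ∂lam = ∫ x, v x * P u x ∂mα := by
    intro u v hu hv hbu hbv
    have hI : Integrable (fun p : 𝕏 × 𝕏 => v p.1 * u p.2) (mα ⊗ₘ π) := by
      rw [← hdis]; exact hprod_int u v hu hv hbu hbv
    rw [hdis, MeasureTheory.Measure.integral_compProd hI]
    refine integral_congr_ae (ae_of_all _ (fun x => ?_))
    exact MeasureTheory.integral_const_mul (v x) u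
  have he2 : ∀ (u v : 𝕏 → ℝ), Measurable u → Measurable v →
      (∀ x, |u x| ≤ M) → (∀ x, |v x| ≤ M) →
      ∫ p, v p.1 * u p.2 ∂lam = ∫ y, Q v y * u y ∂mβ := by
    intro u v hu hv hbu hbv
    have hI : Integrable (fun q : 𝕏 × 𝕏 => v q.2 * u q.1) (mβ ⊗ₘ πhat) := by
      refine integrable_of_abs_le' ((hv.comp measurable_snd).mul (hu.comp measurable_fst))
        (C := M * M) (fun q => ?_)
      rw [abs_mul]
      exact mul_le_mul (hbv q.2) (hbu q.1) (abs_nonneg _) hM0.le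
    rw [hdishat, integral_map measurable_swap.aemeasurable]
    swap
    · rw [← hdishat]
      exact (hprodM u v hu hv).aestronglyMeasurable
    simp only [Prod.fst_swap, Prod.snd_swap]
    rw [MeasureTheory.Measure.integral_compProd hI]
    refine integral_congr_ae (ae_of_all _ (fun y => ?_))
    exact MeasureTheory.integral_mul_const (u y) v
  have hadj : ∀ (u v : 𝕏 → ℝ), Measurable u → Measurable v →
      (∀ x, |u x| ≤ M) → (∀ x, |v x| ≤ M) →
      ∫ x, v x * P u x ∂mα = ∫ y, Q v y * u y ∂mβ := by
    intro u v hu hv hbu hbv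
    rw [← he1 u v hu hv hbu hbv, he2 u v hu hv hbu hbv]
  -- iterates
  set b : ℕ → 𝕏 → ℝ := fun n => S^[n] g with hbdef
  have hb0 : b 0 = g := rfl
  have hbsucc : ∀ n, b (n + 1) = S (b n) := fun n => Function.iterate_succ_apply' S n g
  have hbgood : ∀ n, Measurable (b n) ∧ ∀ x, |b n x| ≤ M := by
    intro n
    induction n with
    | zero => exact ⟨hgm, hMg⟩
    | succ n ih =>
      rw [hbsucc n]
      have h1 := hPgood (b n) ih.1 ih.2
      exact hQgood (P (b n)) h1.1 h1.2
  have hSadj : ∀ (u v : 𝕏 → ℝ), Measurable u → Measurable v →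
      (∀ x, |u x| ≤ M) → (∀ x, |v x| ≤ M) →
      ∫ y, S u y * v y ∂mβ = ∫ x, P u x * P v x ∂mα := by
    intro u v hu hv hbu hbv
    have h1 := hPgood u hu hbu
    have := hadj v (P u) hv h1.1 hbv h1.2
    rw [← this]
  set xseq : ℕ → ℝ := fun n => ∫ y, b n y * g y ∂mβ with hxdef
  have hswap : ∀ i j, (∫ y, b i y * b j y ∂mβ) = xseq (i + j) := by
    intro i
    induction i with
    | zero =>
      intro j
      simp only [hxdef, Nat.zero_add]
      refine integral_congr_ae (ae_of_all _ (fun y => ?_))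
      rw [hb0]
      exact mul_comm _ _
    | succ i ih =>
      intro j
      have hgi := hbgood i
      have hgj := hbgood j
      have e1 : ∫ y, b (i+1) y * b j y ∂mβ = ∫ x, P (b i) x * P (b j) x ∂mα := by
        rw [hbsucc i]
        exact hSadj (b i) (b j) hgi.1 hgj.1 hgi.2 hgj.2
      have e2 : ∫ y, b (j+1) y * b i y ∂mβ = ∫ x, P (b j) x * P (b i) x ∂mα := by
        rw [hbsucc j]
        exact hSadj (b j) (b i) hgj.1 hgi.1 hgj.2 hgi.2
      have e3 : ∫ y, b i y * b (j+1) y ∂mβ = xseq (i + (j+1)) := ih (j+1)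
      have e4 : (∫ y, b (j+1) y * b i y ∂mβ) = ∫ y, b i y * b (j+1) y ∂mβ := by
        refine integral_congr_ae (ae_of_all _ (fun y => mul_comm _ _))
      have e5 : (∫ x, P (b i) x * P (b j) x ∂mα) = ∫ x, P (b j) x * P (b i) x ∂mα := by
        refine integral_congr_ae (ae_of_all _ (fun y => mul_comm _ _))
      rw [e1, e5, ← e2, e4, e3]
      congr 1
      omega
  have hx2m : ∀ m, xseq (m + m) = ∫ y, b m y ^ 2 ∂mβ := by
    intro m
    rw [← hswap m m]
    refine integral_congr_ae (ae_of_all _ (fun y => ?_))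
    exact (sq (b m y)).symm
  have hx2m_nonneg : ∀ m, 0 ≤ xseq (m + m) := by
    intro m
    rw [hx2m m]
    exact integral_nonneg (fun y => sq_nonneg _)
  have hx0 : xseq 0 = ∫ y, g y ^ 2 ∂mβ := by
    have := hx2m 0
    simpa [hb0] using this
  have hx0_nonneg : 0 ≤ xseq 0 := by
    rw [hx0]; exact integral_nonneg (fun y => sq_nonneg _)
  have hx1 : xseq 1 = ∫ x, P g x ^ 2 ∂mα := by
    have e1 : xseq 1 = ∫ y, S g y * g y ∂mβ := by
      simp only [hxdef]
      refine integral_congr_ae (ae_of_all _ (fun y => ?_))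
      have : b 1 = S g := by rw [← hb0, ← hbsucc 0]
      rw [this]
    rw [e1, hSadj g g hgm hgm hMg hMg]
    refine integral_congr_ae (ae_of_all _ (fun x => (sq (P g x)).symm))
  have hx1_nonneg : 0 ≤ xseq 1 := by
    rw [hx1]; exact integral_nonneg (fun x => sq_nonneg _)
  have hsq_int : ∀ (ρ : Measure 𝕏), IsProbabilityMeasure ρ → ∀ u : 𝕏 → ℝ, Measurable u →
      (∀ x, |u x| ≤ M) → Integrable (fun y => u y ^ 2) ρ := by
    intro ρ hρ u hu hb
    refine integrable_of_abs_le' (hu.pow_const 2) (C := M ^ 2) (fun y => ?_)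
    rw [abs_pow]
    exact pow_le_pow_left₀ (abs_nonneg _) (hb y) 2
  -- Cauchy-Schwarz step
  have hCS : ∀ m, xseq m ^ 2 ≤ xseq (m + m) * xseq 0 := by
    intro m
    have hgm' := hbgood m
    have h := cs_sq (hsq_int mβ inferInstance (b m) hgm'.1 hgm'.2)
      (hsq_int mβ inferInstance g hgm hMg)
      (hmul_int mβ inferInstance (b m) g hgm'.1 hgm hgm'.2 hMg)
    calc xseq m ^ 2 = (∫ y, b m y * g y ∂mβ) ^ 2 := rfl
      _ ≤ (∫ y, b m y ^ 2 ∂mβ) * ∫ y, g y ^ 2 ∂mβ := h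
      _ = xseq (m + m) * xseq 0 := by rw [← hx2m m, ← hx0]
  -- oscillation invariant
  have hosc : ∀ n, ∃ c, ∀ x, c ≤ b n x ∧ b n x ≤ c + 2 * M * δ ^ n := by
    intro n
    induction n with
    | zero =>
      refine ⟨-M, fun x => ⟨(abs_le.1 (hMg x)).1, ?_⟩⟩
      have := (abs_le.1 (hMg x)).2
      rw [hb0, pow_zero]
      linarith
    | succ n ih =>
      obtain ⟨c, hc⟩ := ih
      have hgn := hbgood n
      have hL : (0:ℝ) ≤ 2 * M * δ ^ n := by positivity
      obtain ⟨c', hc', -⟩ := kApp_osc_step π hgn.1 hL (fun x => (hc x).1) (fun x => (hc x).2)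
      have hPm : Measurable (P (b n)) := (hPgood (b n) hgn.1 hgn.2).1
      have hq := kApp_bounds πhat hPm (fun y => (hc' y).1) (fun y => (hc' y).2)
      refine ⟨c', fun x => ?_⟩
      rw [hbsucc n]
      refine ⟨(hq x).1, ?_⟩
      calc S (b n) x ≤ c' + 2 * M * δ ^ n * dob π := (hq x).2
        _ = c' + 2 * M * δ ^ (n + 1) := by rw [← hδdef, pow_succ]; ring
  -- tail bound
  have htail : ∀ n, xseq n ≤ 2 * M ^ 2 * δ ^ n := by
    intro n
    obtain ⟨c, hc⟩ := hosc n
    have hgn := hbgood n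
    have hL : (0:ℝ) ≤ 2 * M * δ ^ n := by positivity
    have hint1 : Integrable (fun y => (b n y - c) * g y) mβ := by
      refine integrable_of_abs_le' ((hgn.1.sub measurable_const).mul hgm)
        (C := 2 * M * δ ^ n * M) (fun y => ?_)
      rw [abs_mul]
      refine mul_le_mul ?_ (hMg y) (abs_nonneg _) hL
      exact abs_le.2 ⟨by linarith [(hc y).1], by linarith [(hc y).2]⟩
    have hint2 : Integrable (fun y => c * g y) mβ :=
      (integrable_of_abs_le' hgm hMg).const_mul c
    have hsplit : xseq n = ∫ y, (b n y - c) * g y ∂mβ := by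
      have e : (fun y => b n y * g y) = fun y => (b n y - c) * g y + c * g y :=
        funext fun y => by ring
      show (∫ y, b n y * g y ∂mβ) = _
      rw [e, integral_add hint1 hint2, MeasureTheory.integral_const_mul, hg0,
        mul_zero, add_zero]
    rw [hsplit]
    calc ∫ y, (b n y - c) * g y ∂mβ
        ≤ ∫ _, 2 * M * δ ^ n * M ∂mβ := by
          refine integral_mono hint1 (integrable_const _) (fun y => ?_)
          refine le_trans (le_abs_self _) ?_
          rw [abs_mul]
          refine mul_le_mul ?_ (hMg y) (abs_nonneg _) hL
          exact abs_le.2 ⟨by linarith [(hc y).1], by linarith [(hc y).2]⟩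
      _ = 2 * M ^ 2 * δ ^ n := by
          rw [integral_const]
          simp [measure_univ]
          ring
  -- log-convexity iteration
  have hlogconv : ∀ k : ℕ, xseq 1 ^ (2 ^ k) ≤ xseq 0 ^ (2 ^ k - 1) * xseq (2 ^ k) := by
    intro k
    induction k with
    | zero => simp
    | succ k ih =>
      have h1 : 1 ≤ (2:ℕ) ^ k := Nat.one_le_two_pow
      have h2 : (2:ℕ) ^ (k + 1) = 2 ^ k + 2 ^ k := by
        have := pow_succ 2 k
        omega
      have hCSk := hCS (2 ^ k)
      rw [h2]
      calc xseq 1 ^ (2 ^ k + 2 ^ k) = (xseq 1 ^ (2 ^ k)) ^ 2 := by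
            rw [← pow_mul]
            congr 1
            omega
        _ ≤ (xseq 0 ^ (2 ^ k - 1) * xseq (2 ^ k)) ^ 2 :=
            pow_le_pow_left₀ (pow_nonneg hx1_nonneg _) ih 2
        _ = (xseq 0 ^ (2 ^ k - 1)) ^ 2 * xseq (2 ^ k) ^ 2 := mul_pow _ _ 2
        _ ≤ (xseq 0 ^ (2 ^ k - 1)) ^ 2 * (xseq (2 ^ k + 2 ^ k) * xseq 0) :=
            mul_le_mul_of_nonneg_left hCSk (sq_nonneg _)
        _ = xseq 0 ^ (2 ^ k + 2 ^ k - 1) * xseq (2 ^ k + 2 ^ k) := by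
            rw [← pow_mul, mul_comm (xseq (2 ^ k + 2 ^ k)) (xseq 0), ← mul_assoc,
              ← pow_succ]
            congr 2
            omega
  -- conclude the spectral bound
  have hkey : xseq 1 ≤ δ * xseq 0 := by
    rcases eq_or_lt_of_le hx0_nonneg with hx0z | hx0pos
    · have hc := hCS 1
      rw [← hx0z, mul_zero] at hc
      have hz : xseq 1 = 0 := by nlinarith [sq_nonneg (xseq 1)]
      rw [hz, ← hx0z, mul_zero]
    · have h2M : (0:ℝ) < 2 * M ^ 2 := by positivity
      have hbound : ∀ k : ℕ, xseq 1 ≤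
          Real.exp ((1 - ((2:ℝ) ^ k)⁻¹) * Real.log (xseq 0)) *
            Real.exp (((2:ℝ) ^ k)⁻¹ * Real.log (2 * M ^ 2)) * δ := by
        intro k
        have hn1 : 1 ≤ (2:ℕ) ^ k := Nat.one_le_two_pow
        have hnR : (0:ℝ) < ((2 ^ k : ℕ) : ℝ) := by positivity
        have hcast : (((2:ℕ) ^ k : ℕ) : ℝ) = (2:ℝ) ^ k := by push_cast; ring
        have hchain : xseq 1 ^ (2 ^ k) ≤ xseq 0 ^ (2 ^ k - 1) * (2 * M ^ 2 * δ ^ (2 ^ k)) :=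
          le_trans (hlogconv k)
            (mul_le_mul_of_nonneg_left (htail (2 ^ k)) (pow_nonneg hx0_nonneg _))
        have hx1n : (0:ℝ) ≤ xseq 1 ^ (2 ^ k) := pow_nonneg hx1_nonneg _
        have hroot := Real.rpow_le_rpow hx1n hchain
          (by positivity : (0:ℝ) ≤ (((2 ^ k : ℕ) : ℝ))⁻¹)
        have hLside : ((xseq 1 ^ (2 ^ k) : ℝ)) ^ ((((2 ^ k : ℕ) : ℝ))⁻¹) = xseq 1 := by
          rw [← Real.rpow_natCast (xseq 1) (2 ^ k), ← Real.rpow_mul hx1_nonneg,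
            mul_inv_cancel₀ hnR.ne', Real.rpow_one]
        have hδn : ((δ ^ (2 ^ k) : ℝ)) ^ ((((2 ^ k : ℕ) : ℝ))⁻¹) = δ := by
          rw [← Real.rpow_natCast δ (2 ^ k), ← Real.rpow_mul hδ0,
            mul_inv_cancel₀ hnR.ne', Real.rpow_one]
        have hx0pow : ((xseq 0 ^ (2 ^ k - 1) : ℝ)) ^ ((((2 ^ k : ℕ) : ℝ))⁻¹)
            = Real.exp ((1 - ((2:ℝ) ^ k)⁻¹) * Real.log (xseq 0)) := by
          rw [← Real.rpow_natCast (xseq 0) (2 ^ k - 1), ← Real.rpow_mul hx0_nonneg,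
            Real.rpow_def_of_pos hx0pos]
          congr 1
          rw [Nat.cast_sub hn1, hcast]
          push_cast
          have hne : ((2:ℝ) ^ k) ≠ 0 := by positivity
          field_simp
        have h2Mpow : ((2 * M ^ 2 : ℝ)) ^ ((((2 ^ k : ℕ) : ℝ))⁻¹)
            = Real.exp (((2:ℝ) ^ k)⁻¹ * Real.log (2 * M ^ 2)) := by
          rw [Real.rpow_def_of_pos h2M]
          congr 1
          rw [hcast]
          ring
        have hRside : ((xseq 0 ^ (2 ^ k - 1) * (2 * M ^ 2 * δ ^ (2 ^ k)) : ℝ))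
              ^ ((((2 ^ k : ℕ) : ℝ))⁻¹)
            = Real.exp ((1 - ((2:ℝ) ^ k)⁻¹) * Real.log (xseq 0)) *
              Real.exp (((2:ℝ) ^ k)⁻¹ * Real.log (2 * M ^ 2)) * δ := by
          rw [Real.mul_rpow (pow_nonneg hx0_nonneg _) (by positivity),
            Real.mul_rpow h2M.le (pow_nonneg hδ0 _), hx0pow, h2Mpow, hδn]
          ring
        rw [hLside, hRside] at hroot
        exact hroot
      have hεlim : Tendsto (fun k : ℕ => ((2:ℝ) ^ k)⁻¹) atTop (𝓝 0) := by
        have he : (fun k : ℕ => ((2:ℝ) ^ k)⁻¹) = fun k : ℕ => (2⁻¹ : ℝ) ^ k := by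
          funext k
          rw [inv_pow]
        rw [he]
        exact tendsto_pow_atTop_nhds_zero_of_lt_one (by norm_num) (by norm_num)
      have h1lim : Tendsto (fun k : ℕ => (1 - ((2:ℝ) ^ k)⁻¹) * Real.log (xseq 0)) atTop
          (𝓝 ((1 - 0) * Real.log (xseq 0))) := (tendsto_const_nhds.sub hεlim).mul_const _
      have h2lim : Tendsto (fun k : ℕ => ((2:ℝ) ^ k)⁻¹ * Real.log (2 * M ^ 2)) atTop
          (𝓝 (0 * Real.log (2 * M ^ 2))) := hεlim.mul_const _
      have h3lim := (Real.continuous_exp.tendsto _).comp h1lim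
      have h4lim := (Real.continuous_exp.tendsto _).comp h2lim
      have hlim := (h3lim.mul h4lim).mul_const δ
      have hfinlim : Tendsto (fun k : ℕ =>
          Real.exp ((1 - ((2:ℝ) ^ k)⁻¹) * Real.log (xseq 0)) *
            Real.exp (((2:ℝ) ^ k)⁻¹ * Real.log (2 * M ^ 2)) * δ) atTop
          (𝓝 (xseq 0 * δ)) := by
        have : Real.exp ((1 - 0) * Real.log (xseq 0)) * Real.exp (0 * Real.log (2 * M ^ 2)) * δ
            = xseq 0 * δ := by
          rw [sub_zero, one_mul, Real.exp_log hx0pos, zero_mul, Real.exp_zero, mul_one]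
        rw [← this]
        exact hlim
      have hfin2 : xseq 1 ≤ xseq 0 * δ :=
        ge_of_tendsto hfinlim (Eventually.of_forall hbound)
      calc xseq 1 ≤ xseq 0 * δ := hfin2
        _ = δ * xseq 0 := mul_comm _ _
  -- final assembly
  have hfin : ∫ p, f p.1 * g p.2 ∂lam = ∫ x, f x * P g x ∂mα := he1 g f hgm hfm hMg hMf
  have hPg := hPgood g hgm hMg
  have habs := cs_abs (hsq_int mα inferInstance f hfm hMf)
    (hsq_int mα inferInstance (P g) hPg.1 hPg.2)
    (hmul_int mα inferInstance f (P g) hfm hPg.1 hMf hPg.2)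
  rw [hfin]
  calc |∫ x, f x * P g x ∂mα|
      ≤ Real.sqrt (∫ x, f x ^ 2 ∂mα) * Real.sqrt (∫ x, P g x ^ 2 ∂mα) := habs
    _ ≤ Real.sqrt (∫ x, f x ^ 2 ∂mα) * Real.sqrt (δ * ∫ x, g x ^ 2 ∂mβ) := by
        refine mul_le_mul_of_nonneg_left (Real.sqrt_le_sqrt ?_) (Real.sqrt_nonneg _)
        rw [← hx1, ← hx0]
        exact hkey
    _ = Real.sqrt δ * Real.sqrt (∫ x, f x ^ 2 ∂mα) * Real.sqrt (∫ x, g x ^ 2 ∂mβ) := by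
        rw [Real.sqrt_mul hδ0]
        ring

end Core

/-- **Lemma 4.1 (Sethuraman–Varadhan).** If `λ` is a probability measure on `X × X`
with marginals `α`, `β` and disintegrations `λ = α ⊗ π = swap_*(β ⊗ π̂)`, and `f`, `g`
are square integrable with mean zero w.r.t. `α`, `β` respectively, then
`|∫ f(x₁) g(x₂) λ(dx₁,dx₂)| ≤ √δ(π) ‖f‖_{L²(α)} ‖g‖_{L²(β)}`. -/
theorem covariance_bound {𝕏 : Type*} [MeasurableSpace 𝕏]
    (lam : Measure (𝕏 × 𝕏)) [IsProbabilityMeasure lam]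
    (mα mβ : Measure 𝕏) [IsProbabilityMeasure mα] [IsProbabilityMeasure mβ]
    (hmα : lam.map Prod.fst = mα) (hmβ : lam.map Prod.snd = mβ)
    (π πhat : Kernel 𝕏 𝕏) [IsMarkovKernel π] [IsMarkovKernel πhat]
    (hdis : lam = mα ⊗ₘ π) (hdishat : lam = (mβ ⊗ₘ πhat).map Prod.swap)
    (f g : 𝕏 → ℝ) (hf : MemLp f 2 mα) (hg : MemLp g 2 mβ)
    (hf0 : ∫ x, f x ∂mα = 0) (hg0 : ∫ x, g x ∂mβ = 0) :
    |∫ p, f p.1 * g p.2 ∂lam| ≤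
      Real.sqrt (dob π) * Real.sqrt (∫ x, (f x) ^ 2 ∂mα) *
        Real.sqrt (∫ x, (g x) ^ 2 ∂mβ) := by
  classical
  -- measurable representatives
  set f' : 𝕏 → ℝ := hf.1.mk f with hf'def
  set g' : 𝕏 → ℝ := hg.1.mk g with hg'def
  have hf'm : Measurable f' := hf.1.stronglyMeasurable_mk.measurable
  have hg'm : Measurable g' := hg.1.stronglyMeasurable_mk.measurable
  have hff' : f =ᵐ[mα] f' := hf.1.ae_eq_mk
  have hgg' : g =ᵐ[mβ] g' := hg.1.ae_eq_mk
  have hmemf' : MemLp f' 2 mα := hf.ae_eq hff'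
  have hmemg' : MemLp g' 2 mβ := hg.ae_eq hgg'
  have hsqf : ∫ x, f x ^ 2 ∂mα = ∫ x, f' x ^ 2 ∂mα :=
    integral_congr_ae (hff'.mono fun x hx => by simp only [hx])
  have hsqg : ∫ x, g x ^ 2 ∂mβ = ∫ x, g' x ^ 2 ∂mβ :=
    integral_congr_ae (hgg'.mono fun x hx => by simp only [hx])
  have hg0' : ∫ x, g' x ∂mβ = 0 := (integral_congr_ae hgg').symm.trans hg0
  have hlameq : ∫ p, f p.1 * g p.2 ∂lam = ∫ p, f' p.1 * g' p.2 ∂lam := by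
    refine integral_congr_ae ?_
    have h1 : (fun p : 𝕏 × 𝕏 => f p.1) =ᵐ[lam] fun p => f' p.1 := by
      have h : f =ᵐ[lam.map Prod.fst] f' := by rw [hmα]; exact hff'
      exact ae_eq_comp measurable_fst.aemeasurable h
    have h2 : (fun p : 𝕏 × 𝕏 => g p.2) =ᵐ[lam] fun p => g' p.2 := by
      have h : g =ᵐ[lam.map Prod.snd] g' := by rw [hmβ]; exact hgg'
      exact ae_eq_comp measurable_snd.aemeasurable h
    exact h1.mul h2
  rw [hlameq, hsqf, hsqg]
  -- integrability facts
  have hint_f2 : Integrable (fun x => f' x ^ 2) mα := hmemf'.integrable_sq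
  have hint_g2 : Integrable (fun x => g' x ^ 2) mβ := hmemg'.integrable_sq
  have hint_f1 : Integrable f' mα := hmemf'.integrable one_le_two
  have hint_g1 : Integrable g' mβ := hmemg'.integrable one_le_two
  -- truncations
  set fN : ℕ → 𝕏 → ℝ := fun N x => max (min (f' x) (N:ℝ)) (-(N:ℝ)) with hfNdef
  set gN : ℕ → 𝕏 → ℝ := fun N x => max (min (g' x) (N:ℝ)) (-(N:ℝ)) with hgNdef
  have hfNm : ∀ N, Measurable (fN N) := fun N =>
    (hf'm.min measurable_const).max measurable_const
  have hgNm : ∀ N, Measurable (gN N) := fun N =>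
    (hg'm.min measurable_const).max measurable_const
  have hfNb : ∀ N x, |fN N x| ≤ (N:ℝ) := fun N x =>
    trunc_abs_le_N (f' x) (N:ℝ) (Nat.cast_nonneg N)
  have hgNb : ∀ N x, |gN N x| ≤ (N:ℝ) := fun N x =>
    trunc_abs_le_N (g' x) (N:ℝ) (Nat.cast_nonneg N)
  have hfNle : ∀ N x, |fN N x| ≤ |f' x| := fun N x =>
    trunc_abs_le (f' x) (N:ℝ) (Nat.cast_nonneg N)
  have hgNle : ∀ N x, |gN N x| ≤ |g' x| := fun N x =>
    trunc_abs_le (g' x) (N:ℝ) (Nat.cast_nonneg N)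
  have hgN_int : ∀ N, Integrable (gN N) mβ := fun N =>
    integrable_of_abs_le' (hgNm N) (hgNb N)
  set cN : ℕ → ℝ := fun N => ∫ y, gN N y ∂mβ with hcNdef
  set K : ℝ := ∫ y, |g' y| ∂mβ with hKdef
  have hK0 : 0 ≤ K := integral_nonneg (fun y => abs_nonneg _)
  have hcNK : ∀ N, |cN N| ≤ K := by
    intro N
    calc |cN N| ≤ ∫ y, |gN N y| ∂mβ := by
          simpa [Real.norm_eq_abs] using norm_integral_le_integral_norm (μ := mβ) (gN N)
      _ ≤ K := integral_mono ((hgN_int N).abs) hint_g1.abs (fun y => hgNle N y)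
  have hcN_tendsto : Tendsto cN atTop (𝓝 0) := by
    have h := tendsto_integral_of_dominated_convergence (μ := mβ)
      (F := fun N y => gN N y) (f := g') (bound := fun y => |g' y|)
      (fun N => (hgNm N).aestronglyMeasurable) hint_g1.abs
      (fun N => ae_of_all _ (fun y => by rw [Real.norm_eq_abs]; exact hgNle N y))
      (ae_of_all _ (fun y => trunc_tendsto (g' y)))
    rw [hg0'] at h
    exact h
  set gT : ℕ → 𝕏 → ℝ := fun N y => gN N y - cN N with hgTdef
  have hgTm : ∀ N, Measurable (gT N) := fun N => (hgNm N).sub measurable_const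
  have hgTb : ∀ N x, |gT N x| ≤ (N:ℝ) + K := fun N x =>
    le_trans (abs_sub _ _) (add_le_add (hgNb N x) (hcNK N))
  have hgT0 : ∀ N, ∫ y, gT N y ∂mβ = 0 := by
    intro N
    simp only [hgTdef]
    rw [integral_sub (hgN_int N) (integrable_const _), integral_const]
    simp [measure_univ, hcNdef]
  -- apply the core bound to the truncations
  have hcore : ∀ N : ℕ, |∫ p, fN N p.1 * gT N p.2 ∂lam| ≤
      Real.sqrt (dob π) * Real.sqrt (∫ x, f' x ^ 2 ∂mα) *
        Real.sqrt (∫ x, g' x ^ 2 ∂mβ) := by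
    intro N
    have h := core_bound lam mα mβ π πhat hdis hdishat (fN N) (gT N) (hfNm N) (hgTm N)
      (hfNb N) (hgTb N) (hgT0 N)
    refine le_trans h ?_
    have hδ0 : 0 ≤ dob π := by
      have hX : Nonempty 𝕏 := by
        by_contra hcon
        rw [not_nonempty_iff] at hcon
        have h1 := measure_univ (μ := lam)
        rw [Set.univ_eq_empty_iff.2 inferInstance, measure_empty] at h1
        exact one_ne_zero h1.symm
      exact dob_nonneg π
    have hfsq : ∫ x, fN N x ^ 2 ∂mα ≤ ∫ x, f' x ^ 2 ∂mα := by
      refine integral_mono (integrable_of_abs_le' ((hfNm N).pow_const 2)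
        (C := (N:ℝ) ^ 2) (fun x => by
          rw [abs_pow]
          exact pow_le_pow_left₀ (abs_nonneg _) (hfNb N x) 2)) hint_f2 (fun x => ?_)
      rw [← sq_abs (fN N x), ← sq_abs (f' x)]
      exact pow_le_pow_left₀ (abs_nonneg _) (hfNle N x) 2
    have hgsq : ∫ x, gT N x ^ 2 ∂mβ ≤ ∫ x, g' x ^ 2 ∂mβ := by
      have hgN2_int : Integrable (fun y => gN N y ^ 2) mβ :=
        integrable_of_abs_le' ((hgNm N).pow_const 2) (C := (N:ℝ) ^ 2) (fun x => by
          rw [abs_pow]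
          exact pow_le_pow_left₀ (abs_nonneg _) (hgNb N x) 2)
      have hexp : ∫ y, gT N y ^ 2 ∂mβ
          = (∫ y, gN N y ^ 2 ∂mβ) - cN N ^ 2 := by
        have e : (fun y => gT N y ^ 2)
            = fun y => gN N y ^ 2 - (2 * cN N) * gN N y + cN N ^ 2 :=
          funext fun y => by simp only [hgTdef]; ring
        rw [e, integral_add (show Integrable (fun y => gN N y ^ 2 - (2 * cN N) * gN N y) mβ
            from hgN2_int.sub ((hgN_int N).const_mul _)) (integrable_const _),
          integral_sub hgN2_int ((hgN_int N).const_mul _), MeasureTheory.integral_const_mul,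
          integral_const]
        simp [measure_univ]
        ring
      have hgNsq : ∫ y, gN N y ^ 2 ∂mβ ≤ ∫ y, g' y ^ 2 ∂mβ := by
        refine integral_mono hgN2_int hint_g2 (fun y => ?_)
        rw [← sq_abs (gN N y), ← sq_abs (g' y)]
        exact pow_le_pow_left₀ (abs_nonneg _) (hgNle N y) 2
      rw [hexp]
      nlinarith [sq_nonneg (cN N)]
    have h1 : Real.sqrt (∫ x, fN N x ^ 2 ∂mα) ≤ Real.sqrt (∫ x, f' x ^ 2 ∂mα) :=
      Real.sqrt_le_sqrt hfsq
    have h2 : Real.sqrt (∫ x, gT N x ^ 2 ∂mβ) ≤ Real.sqrt (∫ x, g' x ^ 2 ∂mβ) :=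
      Real.sqrt_le_sqrt hgsq
    have hs0 : 0 ≤ Real.sqrt (dob π) := Real.sqrt_nonneg _
    calc Real.sqrt (dob π) * Real.sqrt (∫ x, fN N x ^ 2 ∂mα) *
          Real.sqrt (∫ x, gT N x ^ 2 ∂mβ)
        ≤ Real.sqrt (dob π) * Real.sqrt (∫ x, f' x ^ 2 ∂mα) *
          Real.sqrt (∫ x, gT N x ^ 2 ∂mβ) := by
          refine mul_le_mul_of_nonneg_right (mul_le_mul_of_nonneg_left h1 hs0)
            (Real.sqrt_nonneg _)
      _ ≤ Real.sqrt (dob π) * Real.sqrt (∫ x, f' x ^ 2 ∂mα) *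
          Real.sqrt (∫ x, g' x ^ 2 ∂mβ) := by
          refine mul_le_mul_of_nonneg_left h2 (mul_nonneg hs0 (Real.sqrt_nonneg _))
  -- dominated convergence for the left-hand side
  have hIf2 : Integrable (fun p : 𝕏 × 𝕏 => f' p.1 ^ 2) lam := by
    have h : Integrable (fun x => f' x ^ 2) (lam.map Prod.fst) := by rw [hmα]; exact hint_f2
    exact (integrable_map_measure (hf'm.pow_const 2).aestronglyMeasurable
      measurable_fst.aemeasurable).1 h
  have hIg2 : Integrable (fun p : 𝕏 × 𝕏 => g' p.2 ^ 2) lam := by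
    have h : Integrable (fun x => g' x ^ 2) (lam.map Prod.snd) := by rw [hmβ]; exact hint_g2
    exact (integrable_map_measure (hg'm.pow_const 2).aestronglyMeasurable
      measurable_snd.aemeasurable).1 h
  have hIf1 : Integrable (fun p : 𝕏 × 𝕏 => f' p.1) lam := by
    have h : Integrable f' (lam.map Prod.fst) := by rw [hmα]; exact hint_f1
    exact (integrable_map_measure hf'm.aestronglyMeasurable
      measurable_fst.aemeasurable).1 h
  have hbound_int : Integrable (fun p : 𝕏 × 𝕏 => |f' p.1| * (|g' p.2| + K)) lam := by
    have e : (fun p : 𝕏 × 𝕏 => |f' p.1| * (|g' p.2| + K))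
        = fun p => |f' p.1| * |g' p.2| + |f' p.1| * K := funext fun p => by ring
    rw [e]
    refine Integrable.add ?_ (hIf1.abs.mul_const K)
    refine ((hIf2.add hIg2).div_const 2).mono'
      ((hf'm.comp measurable_fst).abs.mul
        (hg'm.comp measurable_snd).abs).aestronglyMeasurable
      (ae_of_all _ (fun p => ?_))
    rw [Real.norm_eq_abs, abs_of_nonneg (mul_nonneg (abs_nonneg _) (abs_nonneg _))]
    simp only [Pi.add_apply]
    nlinarith [sq_nonneg (|f' p.1| - |g' p.2|), sq_abs (f' p.1), sq_abs (g' p.2)]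
  have hDCT : Tendsto (fun N => ∫ p, fN N p.1 * gT N p.2 ∂lam) atTop
      (𝓝 (∫ p, f' p.1 * g' p.2 ∂lam)) := by
    refine tendsto_integral_of_dominated_convergence
      (bound := fun p : 𝕏 × 𝕏 => |f' p.1| * (|g' p.2| + K))
      (fun N => (((hfNm N).comp measurable_fst).mul
        ((hgTm N).comp measurable_snd)).aestronglyMeasurable)
      hbound_int (fun N => ae_of_all _ (fun p => ?_)) (ae_of_all _ (fun p => ?_))
    · rw [Real.norm_eq_abs, abs_mul]
      refine mul_le_mul (hfNle N p.1) ?_ (abs_nonneg _) (abs_nonneg _)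
      exact le_trans (abs_sub _ _) (add_le_add (hgNle N p.2) (hcNK N))
    · have hl1 := trunc_tendsto (f' p.1)
      have hl2 := (trunc_tendsto (g' p.2)).sub hcN_tendsto
      rw [sub_zero] at hl2
      exact hl1.mul hl2
  exact le_of_tendsto hDCT.abs (Eventually.of_forall hcore)
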